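/- arXiv:math/0310094 — 3 statements merged into one kernel-verified Lean document; each statement's English description precedes it below -/
import Mathlib

section
/- The von Neumann bornology of a metrizable topological vector space is bornologically metrizable: if V is a metrizable locally convex topological vector space and (S_n) is a sequence of von Neumann bounded subsets (subsets absorbed by every neighborhood of zero), then there exists a sequence of positive scalars (ε_n) such that ⋃_n ε_n S_n is von Neumann bounded. -/
/-
Fix a countable decreasing basis `B k` of neighbourhoods of zero. Each bounded set `S n` is
absorbed by `B n`, so some `ε n > 0` has `ε n • S n ⊆ B n`; the sets `ε n • S n` then tend to zero.
A union of bounded sets tending to zero is bounded: a balanced neighbourhood `W` absorbs the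
tail, which lies inside `W`, and the remaining finitely many sets form a bounded set.
-/

open Pointwise Filter Set Topology Bornology

section

variable {𝕜 E : Type*} [AddCommGroup E] [TopologicalSpace E]

theorem Bornology.IsVonNBounded.smul_set [NormedDivisionRing 𝕜] [Module 𝕜 E] {S : Set E}
    (hS : IsVonNBounded 𝕜 S) (a : 𝕜) : IsVonNBounded 𝕜 (a • S) := by
  rw [isVonNBounded_iff_tendsto_smallSets_nhds] at hS ⊢
  have hmul : Tendsto (· * a) (𝓝 (0 : 𝕜)) (𝓝 0) := by
    simpa using (continuous_mul_const a).tendsto 0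
  simpa only [Function.comp_def, smul_smul] using hS.comp hmul

theorem Bornology.isVonNBounded_iUnion_of_tendsto_smallSets [NontriviallyNormedField 𝕜]
    [Module 𝕜 E] [ContinuousSMul 𝕜 E] {T : ℕ → Set E} (hT : ∀ n, IsVonNBounded 𝕜 (T n))
    (hlim : Tendsto T atTop (𝓝 0).smallSets) : IsVonNBounded 𝕜 (⋃ n, T n) := by
  intro U hU
  obtain ⟨W, ⟨hW, hWb⟩, hWU⟩ := (nhds_basis_balanced 𝕜 E).mem_iff.1 hU
  obtain ⟨N, hN⟩ := eventually_atTop.1 (tendsto_smallSets_iff.1 hlim W hW)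
  have head : IsVonNBounded 𝕜 (⋃ n < N, T n) :=
    (isVonNBounded_biUnion (finite_lt_nat N)).2 fun n _ ↦ hT n
  have tail : ⋃ n ≥ N, T n ⊆ W := iUnion₂_subset hN
  have split : ⋃ n, T n ⊆ (⋃ n < N, T n) ∪ ⋃ n ≥ N, T n := by
    refine iUnion_subset fun n ↦ ?_
    rcases lt_or_ge n N with h | h
    · exact subset_union_of_subset_left (subset_iUnion₂ (s := fun n (_ : n < N) ↦ T n) n h) _
    · exact subset_union_of_subset_right (subset_iUnion₂ (s := fun n (_ : n ≥ N) ↦ T n) n h) _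
  exact ((head hU).union ((hWb.absorbs_self.mono_left hWU).mono_right tail)).mono_right split

end

theorem Bornology.exists_pos_smul_tendsto_smallSets {V : Type*} [AddCommGroup V] [Module ℝ V]
    [TopologicalSpace V] [(𝓝 (0 : V)).IsCountablyGenerated] {S : ℕ → Set V}
    (hS : ∀ n, IsVonNBounded ℝ (S n)) :
    ∃ ε : ℕ → ℝ, (∀ n, 0 < ε n) ∧ Tendsto (fun n ↦ ε n • S n) atTop (𝓝 0).smallSets := by
  obtain ⟨B, hB⟩ := (𝓝 (0 : V)).exists_antitone_basis
  have small : ∀ n, ∃ ε : ℝ, 0 < ε ∧ ε • S n ⊆ B n := fun n ↦ by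
    have h : ∀ᶠ c in 𝓝[>] (0 : ℝ), c • S n ⊆ B n :=
      ((hS n).tendsto_smallSets_nhds.mono_left nhdsWithin_le_nhds).eventually
        (eventually_smallSets_subset.2 (hB.mem n))
    exact (eventually_mem_nhdsWithin.and h).exists
  choose ε hε hεB using small
  exact ⟨ε, hε, hB.tendsto_smallSets.smallSets_mono (Eventually.of_forall hεB)⟩

theorem stmt_1_general {V : Type*} [AddCommGroup V] [Module ℝ V] [TopologicalSpace V]
    [ContinuousSMul ℝ V]
    [TopologicalSpace.MetrizableSpace V]
    (S : ℕ → Set V) (hS : ∀ n, Bornology.IsVonNBounded ℝ (S n)) :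
    ∃ ε : ℕ → ℝ, (∀ n, 0 < ε n) ∧
      Bornology.IsVonNBounded ℝ (⋃ n, ε n • S n) := by
  obtain ⟨ε, hε, hlim⟩ := exists_pos_smul_tendsto_smallSets hS
  exact ⟨ε, hε, isVonNBounded_iUnion_of_tendsto_smallSets (fun n ↦ (hS n).smul_set (ε n)) hlim⟩

/-- The von Neumann bornology of a metrizable locally convex
topological vector space is bornologically metrizable. -/
theorem stmt_1 {V : Type*} [AddCommGroup V] [Module ℝ V] [TopologicalSpace V]
    [IsTopologicalAddGroup V] [ContinuousSMul ℝ V] [LocallyConvexSpace ℝ V]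
    [TopologicalSpace.MetrizableSpace V]
    (S : ℕ → Set V) (hS : ∀ n, Bornology.IsVonNBounded ℝ (S n)) :
    ∃ ε : ℕ → ℝ, (∀ n, 0 < ε n) ∧
      Bornology.IsVonNBounded ℝ (⋃ n, ε n • S n) :=
  stmt_1_general S hS
end

section
/- Every locally compact topological group contains an open subgroup U such that U/U₀ is compact, where U₀ is the identity component of U; that is, every locally compact group contains an open almost connected subgroup. -/
/-!
The identity component `G₀` is a closed normal subgroup and `G ⧸ G₀` is a locally compact,
Hausdorff, totally disconnected group. By van Dantzig's theorem it has a compact open subgroup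
`H`: inside a compact open neighbourhood `W` of `1` pick a neighbourhood `V` of `1` with
`W * V ⊆ W`; the subgroup generated by `V ∩ V⁻¹` is open and contained in `W`. The preimage `U`
of `H` is an open, hence clopen, subgroup of `G`, so `U₀ = G₀`, and `U ⧸ G₀ ≃ₜ H` is compact
because the quotient map restricted to the open set `U` is open.
-/

open Set Filter
open scoped Pointwise

section

variable {G : Type*} [Group G] [TopologicalSpace G] [IsTopologicalGroup G]

theorem exists_openSubgroup_subset_of_isCompact_of_isOpen {W : Set G} (hWc : IsCompact W)
    (hWo : IsOpen W) (hW1 : 1 ∈ W) : ∃ H : OpenSubgroup G, (H : Set G) ⊆ W := by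
  obtain ⟨V, hV, hWV⟩ := compact_open_separated_mul_right hWc hWo subset_rfl
  let H := Subgroup.closure (V ∩ V⁻¹)
  have hWH : ∀ h ∈ H, ∀ w ∈ W, w * h ∈ W := by
    intro h hh
    induction hh using Subgroup.closure_induction'' with
    | mem x hx => exact fun w hw ↦ hWV (mul_mem_mul hw hx.1)
    | inv_mem x hx => exact fun w hw ↦ hWV (mul_mem_mul hw hx.2)
    | one => simp
    | mul x y _ _ hx hy => exact fun w hw ↦ mul_assoc w x y ▸ hy _ (hx w hw)
  have hVH : V ∩ V⁻¹ ⊆ H := Subgroup.subset_closure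
  refine ⟨⟨H, H.isOpen_of_mem_nhds (g := 1) ?_⟩, fun h hh ↦ one_mul h ▸ hWH h hh 1 hW1⟩
  exact mem_of_superset (inter_mem hV (inv_mem_nhds_one G hV)) hVH

theorem exists_isCompact_openSubgroup [LocallyCompactSpace G] [T2Space G]
    [TotallyDisconnectedSpace G] : ∃ H : OpenSubgroup G, IsCompact (H : Set G) := by
  obtain ⟨K, hKc, hK1⟩ := exists_compact_mem_nhds (1 : G)
  obtain ⟨V, hVclopen, hV1, hVK⟩ := loc_compact_Haus_tot_disc_of_zero_dim.mem_nhds_iff.mp hK1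
  have hVc : IsCompact V := hKc.of_isClosed_subset hVclopen.1 hVK
  obtain ⟨H, hHV⟩ := exists_openSubgroup_subset_of_isCompact_of_isOpen hVc hVclopen.2 hV1
  exact ⟨H, hVc.of_isClosed_subset H.isClosed hHV⟩

theorem mem_connectedComponent_iff_inv_mul_mem {a b : G} :
    b ∈ connectedComponent a ↔ a⁻¹ * b ∈ connectedComponent (1 : G) := by
  rw [← mul_one a, ← smul_connectedComponent, mem_smul_set_iff_inv_smul_mem, mul_one, smul_eq_mul]

instance Subgroup.connectedComponentOfOne_normal :
    (Subgroup.connectedComponentOfOne G).Normal where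
  conj_mem n hn g := by
    have hconj : Continuous fun x : G ↦ g * x * g⁻¹ := by fun_prop
    show g * n * g⁻¹ ∈ connectedComponent (1 : G)
    simpa using hconj.image_connectedComponent_subset 1 ⟨n, hn, rfl⟩

instance Subgroup.isClosed_connectedComponentOfOne :
    IsClosed (Subgroup.connectedComponentOfOne G : Set G) :=
  isClosed_connectedComponent

instance totallyDisconnectedSpace_quotient_connectedComponentOfOne :
    TotallyDisconnectedSpace (G ⧸ Subgroup.connectedComponentOfOne G) := by
  let φ : G ⧸ Subgroup.connectedComponentOfOne G → ConnectedComponents G :=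
    Quotient.lift ConnectedComponents.mk fun a b hab ↦ by
      rw [eq_comm, ConnectedComponents.coe_eq_coe', mem_connectedComponent_iff_inv_mul_mem]
      exact QuotientGroup.leftRel_apply.mp hab
  have hφ : Function.Injective φ := by
    rintro ⟨a⟩ ⟨b⟩ hab
    refine QuotientGroup.eq.mpr (mem_connectedComponent_iff_inv_mul_mem.mp ?_)
    exact ConnectedComponents.coe_eq_coe'.mp hab.symm
  have hφc : Continuous φ := continuous_quot_lift _ ConnectedComponents.continuous_coe
  exact ⟨isTotallyDisconnected_of_image hφc.continuousOn hφ
    (isTotallyDisconnected_of_totallyDisconnectedSpace _)⟩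

theorem Subgroup.connectedComponentOfOne_eq_subgroupOf {U : Subgroup G}
    (hU : IsClopen (U : Set G)) :
    connectedComponentOfOne U = (connectedComponentOfOne G).subgroupOf U := by
  ext x
  rw [mem_subgroupOf]
  show x ∈ connectedComponent 1 ↔ (x : G) ∈ connectedComponent 1
  rw [← hU.connectedComponentIn_eq U.one_mem, connectedComponentIn_eq_image U.one_mem]
  exact Subtype.val_injective.mem_set_image.symm

theorem compactSpace_quotient_subgroupOf {N U : Subgroup G} [N.Normal] (hU : IsOpen (U : Set G))
    (hUN : IsCompact ((↑) '' (U : Set G) : Set (G ⧸ N))) :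
    CompactSpace (U ⧸ N.subgroupOf U) := by
  let f : U →* G ⧸ N := (QuotientGroup.mk' N).comp U.subtype
  have hf : IsOpenMap f := QuotientGroup.isOpenMap_coe.comp hU.isOpenMap_subtype_val
  have hker : f.ker = N.subgroupOf U := by
    ext; simp [f, Subgroup.mem_subgroupOf]
  have hrange : (f.range : Set (G ⧸ N)) = (↑) '' (U : Set G) := by
    simp [f, MonoidHom.range_comp]
  have : CompactSpace f.range := isCompact_iff_compactSpace.mp (by rwa [hrange])
  rw [← hker]
  exact (ContinuousMulEquiv.quotientKerEquivRange (hf.isStrictMap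
    (continuous_quot_mk.comp continuous_subtype_val))).toHomeomorph.symm.compactSpace

end

/-- Every locally compact group contains an open almost connected
subgroup, i.e. an open subgroup U with U/U₀ compact, U₀ the identity component. -/
theorem stmt_2 {G : Type*} [Group G] [TopologicalSpace G] [IsTopologicalGroup G]
    [LocallyCompactSpace G] :
    ∃ U : Subgroup G, IsOpen (U : Set G) ∧
      CompactSpace ((↥U) ⧸ (Subgroup.connectedComponentOfOne ↥U)) := by
  let N := Subgroup.connectedComponentOfOne G
  obtain ⟨H, hH⟩ := exists_isCompact_openSubgroup (G := G ⧸ N)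
  let U := (H : Subgroup (G ⧸ N)).comap (QuotientGroup.mk' N)
  have hU : IsOpen (U : Set G) := H.isOpen.preimage continuous_quot_mk
  have hUN : ((↑) '' (U : Set G) : Set (G ⧸ N)) = H :=
    image_preimage_eq _ QuotientGroup.mk_surjective
  refine ⟨U, hU, ?_⟩
  rw [Subgroup.connectedComponentOfOne_eq_subgroupOf ⟨U.isClosed_of_isOpen hU, hU⟩]
  exact compactSpace_quotient_subgroupOf hU (hUN ▸ hH)
end

section
/- Let G be a locally compact group, let I be a downward directed family of compact subgroups with ⋂ I = {1}, and suppose each k ∈ I is contained in an open subgroup U_k such that U_k/k has no small subgroups. If k ∈ I has the no-small-subgroups property relative to its ambient quotient (i.e., there is a neighborhood of the identity in N_G(k)/k containing no nontrivial subgroup), then for every such k the set of k' ∈ I with k' ⊆ k is cofinal in I; in particular I is a neighborhood basis filter refinement: every neighborhood of 1 in G contains some k' ∈ I. -/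
open Filter

/-- A topological group has no small subgroups if some neighborhood of the
identity contains no nontrivial subgroup. -/
def HasNoSmallSubgroups (L : Type*) [Group L] [TopologicalSpace L] : Prop :=
  ∃ V ∈ nhds (1 : L), ∀ H : Subgroup L, (H : Set L) ⊆ V → H = ⊥

/-!
The points `x` with `1 ⤳ x` form the subgroup `closure {1}`, which lies in every neighborhood
of `1`. In `N_G(k)/k` it is therefore trivial, and since `N_G(k)` is open it follows that
`closure {1} ⊆ k` for every `k ∈ I`. As `⋂ I = {1}`, the identity is closed and `G` is
Hausdorff; then the members of `I` are compact and closed, and a directed family of such sets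
with intersection `{1}` eventually enters every neighborhood of `1`.
-/

open Topology

theorem HasNoSmallSubgroups.eq_one_of_one_specializes {L : Type*} [Group L] [TopologicalSpace L]
    [IsTopologicalGroup L] (h : HasNoSmallSubgroups L) {x : L} (hx : (1 : L) ⤳ x) : x = 1 := by
  obtain ⟨V, hV, hVbot⟩ := h
  have hsub : ((⊥ : Subgroup L).topologicalClosure : Set L) ⊆ V := fun y hy =>
    mem_of_mem_nhds <| (specializes_iff_mem_closure.2 hy).symm.nhds_le_nhds hV
  have hx' : x ∈ (⊥ : Subgroup L).topologicalClosure := specializes_iff_mem_closure.1 hx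
  rwa [hVbot _ hsub, Subgroup.mem_bot] at hx'

section

variable {G : Type*} [Group G] [TopologicalSpace G]

theorem Subgroup.exists_mem_subset_of_biInter_eq_one [T2Space G] {I : Set (Subgroup G)}
    (hne : I.Nonempty) (hcompact : ∀ k ∈ I, IsCompact (k : Set G))
    (hdir : ∀ k₁ ∈ I, ∀ k₂ ∈ I, ∃ k₃ ∈ I, k₃ ≤ k₁ ∧ k₃ ≤ k₂)
    (hinter : ⋂ k ∈ I, (k : Set G) = {1}) {W : Set G} (hW : W ∈ 𝓝 1) :
    ∃ k ∈ I, (k : Set G) ⊆ W := by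
  have : Nonempty I := hne.to_subtype
  have hdir' : Directed (· ⊇ ·) fun k : I => (k : Set G) := fun k₁ k₂ => by
    obtain ⟨k₃, hk₃, h₁, h₂⟩ := hdir k₁ k₁.2 k₂ k₂.2
    exact ⟨⟨k₃, hk₃⟩, h₁, h₂⟩
  obtain ⟨k, hk⟩ := exists_subset_nhds_of_isCompact hdir' (fun k => hcompact k k.2)
    (U := W) fun x hx => by
      rw [← Set.biInter_eq_iInter I fun k _ => (k : Set G), hinter] at hx
      rwa [hx]
  exact ⟨k, k.2, hk⟩

variable [IsTopologicalGroup G]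

theorem Subgroup.mem_of_one_specializes {H K : Subgroup G} (hH : IsOpen (H : Set G))
    [(K.subgroupOf H).Normal] (hnss : HasNoSmallSubgroups (H ⧸ K.subgroupOf H)) {x : G}
    (hx : (1 : G) ⤳ x) : x ∈ K := by
  have hxH : x ∈ H := hx.symm.mem_open hH H.one_mem
  have hx' : (1 : H) ⤳ ⟨x, hxH⟩ := (subtype_specializes_iff _ _).2 hx
  have hmk := hnss.eq_one_of_one_specializes (hx'.map QuotientGroup.continuous_mk)
  exact Subgroup.mem_subgroupOf.1 ((QuotientGroup.eq_one_iff _).1 hmk)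

theorem t2Space_of_biInter_eq_one {I : Set (Subgroup G)} (hinter : ⋂ k ∈ I, (k : Set G) = {1})
    (hmem : ∀ k ∈ I, ∀ x : G, (1 : G) ⤳ x → x ∈ k) : T2Space G := by
  refine IsTopologicalGroup.t2Space_iff_one_closed.2 (closure_subset_iff_isClosed.1 ?_)
  intro x hx
  rw [← hinter, Set.mem_iInter₂]
  exact fun k hk => hmem k hk x (specializes_iff_mem_closure.2 hx)

end

theorem stmt_4_general {G : Type*} [Group G] [TopologicalSpace G] [IsTopologicalGroup G]
    (I : Set (Subgroup G))
    (hne : I.Nonempty)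
    (hcompact : ∀ k ∈ I, IsCompact (k : Set G))
    (hdir : ∀ k₁ ∈ I, ∀ k₂ ∈ I, ∃ k₃ ∈ I, k₃ ≤ k₁ ∧ k₃ ≤ k₂)
    (hinter : ⋂ k ∈ I, (k : Set G) = {1})
    (hopen : ∀ k ∈ I, IsOpen (Subgroup.normalizer (k : Set G) : Set G))
    (hnss : ∀ k ∈ I,
      HasNoSmallSubgroups (↥(Subgroup.normalizer (k : Set G)) ⧸ k.subgroupOf (Subgroup.normalizer (k : Set G)))) :
    (∀ k ∈ I, ∀ j ∈ I, ∃ k' ∈ I, k' ≤ j ∧ k' ≤ k) ∧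
    (∀ W ∈ nhds (1 : G), ∃ k' ∈ I, (k' : Set G) ⊆ W) := by
  have : T2Space G := t2Space_of_biInter_eq_one hinter fun k hk _ hx =>
    Subgroup.mem_of_one_specializes (hopen k hk) (hnss k hk) hx
  exact ⟨fun k hk j hj => hdir j hj k hk, fun W hW =>
    Subgroup.exists_mem_subset_of_biInter_eq_one hne hcompact hdir hinter hW⟩

/-- Given a downward directed family I of compact subgroups of a
locally compact group G with ⋂ I = {1}, each contained in an open subgroup U_k
with U_k/k having no small subgroups (we use the normalizer quotient N_G(k)/k),
the subfamily {k' ∈ I | k' ⊆ k} is cofinal in I for every k ∈ I, and every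
neighborhood of 1 contains some member of I. -/
theorem stmt_4 {G : Type*} [Group G] [TopologicalSpace G] [IsTopologicalGroup G]
    [LocallyCompactSpace G]
    (I : Set (Subgroup G))
    (hne : I.Nonempty)
    (hcompact : ∀ k ∈ I, IsCompact (k : Set G))
    (hdir : ∀ k₁ ∈ I, ∀ k₂ ∈ I, ∃ k₃ ∈ I, k₃ ≤ k₁ ∧ k₃ ≤ k₂)
    (hinter : ⋂ k ∈ I, (k : Set G) = {1})
    (hopen : ∀ k ∈ I, IsOpen (Subgroup.normalizer (k : Set G) : Set G))
    (hnss : ∀ k ∈ I,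
      HasNoSmallSubgroups (↥(Subgroup.normalizer (k : Set G)) ⧸ k.subgroupOf (Subgroup.normalizer (k : Set G)))) :
    (∀ k ∈ I, ∀ j ∈ I, ∃ k' ∈ I, k' ≤ j ∧ k' ≤ k) ∧
    (∀ W ∈ nhds (1 : G), ∃ k' ∈ I, (k' : Set G) ⊆ W) :=
  stmt_4_general I hne hcompact hdir hinter hopen hnss
end
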